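/- Let K be the additive Laplace kernel on ℝ defined by K(y) := L(y, v) for some v > 0. Then for every γ ≥ 1, the contraction coefficient of K under E_γ-divergence is trivial: η_γ(K) = 1. -/

import Mathlib

open MeasureTheory ProbabilityTheory Real

noncomputable def Egamma {Y : Type*} [MeasurableSpace Y] (γ : ℝ) (P Q : Measure Y) : ℝ :=
  ⨆ A : {A : Set Y // MeasurableSet A}, ((P A.1).toReal - γ * (Q A.1).toReal)

noncomputable def etaGamma {Y : Type*} [MeasurableSpace Y] (γ : ℝ) (K : Kernel Y Y) : ℝ :=
  ⨆ p : {p : Measure Y × Measure Y //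
      IsProbabilityMeasure p.1 ∧ IsProbabilityMeasure p.2 ∧ Egamma γ p.1 p.2 ≠ 0},
    Egamma γ (p.1.1.bind K) (p.1.2.bind K) / Egamma γ p.1.1 p.1.2

/-- The Laplace distribution on `ℝ` with mean `m` and scale `v` (variance `2v²`). -/
noncomputable def laplaceMeasure (m v : ℝ) : Measure ℝ :=
  volume.withDensity fun t => ENNReal.ofReal ((1 / (2 * v)) * Real.exp (-|t - m| / v))

/-! Data processing gives `η_γ(K) ≤ 1` for every Markov kernel: by the layer-cake formula,
`∫ f dP - γ ∫ f dQ ≤ E_γ(P‖Q)` for every measurable `f` with values in `[0, 1]`, and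
`P.bind K (A) - γ Q.bind K (A)` is of this form with `f = K(·)(A)`. Conversely, the Dirac inputs
at `0` and `2c` have `E_γ = 1`, while testing their outputs `L(0, v)`, `L(2c, v)` on `(-∞, c]`
gives `E_γ ≥ 1 - (1 + γ)/2 · e^{-c/v}`, which tends to `1` as `c → ∞`. -/

open Set Filter Topology

section Egamma

variable {Y : Type*} [MeasurableSpace Y] {γ : ℝ}

lemma Egamma_bddAbove (hγ : 0 ≤ γ) (P Q : Measure Y) [IsFiniteMeasure P] :
    BddAbove (range fun A : {A : Set Y // MeasurableSet A} =>
      (P A.1).toReal - γ * (Q A.1).toReal) := by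
  refine ⟨P.real univ, ?_⟩
  rintro _ ⟨A, rfl⟩
  have hP : (P A.1).toReal ≤ P.real univ := measureReal_mono (subset_univ _)
  have hQ : 0 ≤ γ * (Q A.1).toReal := by positivity
  dsimp only
  linarith

lemma sub_le_Egamma (hγ : 0 ≤ γ) (P Q : Measure Y) [IsFiniteMeasure P] {A : Set Y}
    (hA : MeasurableSet A) : (P A).toReal - γ * (Q A).toReal ≤ Egamma γ P Q :=
  le_ciSup (Egamma_bddAbove hγ P Q) ⟨A, hA⟩

lemma Egamma_nonneg (hγ : 0 ≤ γ) (P Q : Measure Y) [IsFiniteMeasure P] :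
    0 ≤ Egamma γ P Q := by
  simpa using sub_le_Egamma hγ P Q MeasurableSet.empty

lemma Egamma_le_one (hγ : 0 ≤ γ) (P Q : Measure Y) [IsProbabilityMeasure P] :
    Egamma γ P Q ≤ 1 := by
  refine Real.iSup_le (fun A => ?_) zero_le_one
  have hP : (P A.1).toReal ≤ 1 := measureReal_le_one
  have hQ : 0 ≤ γ * (Q A.1).toReal := by positivity
  linarith

lemma Egamma_dirac_dirac [MeasurableSingletonClass Y] (hγ : 0 ≤ γ) {a b : Y} (hab : a ≠ b) :
    Egamma γ (Measure.dirac a) (Measure.dirac b) = 1 := by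
  refine le_antisymm (Egamma_le_one hγ _ _) ?_
  simpa [hab.symm] using sub_le_Egamma hγ (Measure.dirac a) (Measure.dirac b)
    (measurableSet_singleton a)

lemma integral_sub_mul_integral_le_Egamma (hγ : 0 ≤ γ) (P Q : Measure Y) [IsFiniteMeasure P]
    [IsFiniteMeasure Q] {f : Y → ℝ} (hf : Measurable f) (hf0 : ∀ y, 0 ≤ f y)
    (hf1 : ∀ y, f y ≤ 1) : ∫ y, f y ∂P - γ * ∫ y, f y ∂Q ≤ Egamma γ P Q := by
  have hint : ∀ μ : Measure Y, [IsFiniteMeasure μ] → Integrable f μ := fun μ _ =>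
    (integrable_const (1 : ℝ)).mono' hf.aestronglyMeasurable
      (ae_of_all _ fun y => by simpa [abs_of_nonneg (hf0 y)] using hf1 y)
  have hlayer : ∀ μ : Measure Y, [IsFiniteMeasure μ] →
      ∫ y, f y ∂μ = ∫ t in Ioc 0 1, μ.real {y | t ≤ f y} := fun μ _ =>
    (hint μ).integral_eq_integral_Ioc_meas_le (ae_of_all _ hf0) (ae_of_all _ hf1)
  have htail : ∀ μ : Measure Y, [IsFiniteMeasure μ] →
      IntegrableOn (fun t => μ.real {y | t ≤ f y}) (Ioc 0 1) := fun μ _ =>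
    ((Antitone.locallyIntegrable fun s t hst =>
      measureReal_mono fun y (hy : t ≤ f y) => hst.trans hy).integrableOn_isCompact
      isCompact_Icc).mono_set Ioc_subset_Icc_self
  rw [hlayer P, hlayer Q, ← integral_const_mul,
    ← integral_sub (htail P) ((htail Q).const_mul γ)]
  calc ∫ t in Ioc 0 1, (P.real {y | t ≤ f y} - γ * Q.real {y | t ≤ f y})
      ≤ ∫ _ in Ioc (0 : ℝ) 1, Egamma γ P Q :=
        setIntegral_mono_on ((htail P).sub ((htail Q).const_mul γ))
          (integrableOn_const measure_Ioc_lt_top.ne) measurableSet_Ioc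
          fun t _ => sub_le_Egamma hγ P Q (hf measurableSet_Ici)
    _ = Egamma γ P Q := by simp

lemma Egamma_bind_le {X : Type*} [MeasurableSpace X] (hγ : 0 ≤ γ) (P Q : Measure X)
    [IsFiniteMeasure P] [IsFiniteMeasure Q] (K : Kernel X Y) [IsMarkovKernel K] :
    Egamma γ (P.bind K) (Q.bind K) ≤ Egamma γ P Q := by
  refine Real.iSup_le (fun ⟨A, hA⟩ => ?_) (Egamma_nonneg hγ P Q)
  have hbind : ∀ μ : Measure X, ((μ.bind K) A).toReal = ∫ x, (K x A).toReal ∂μ := by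
    intro μ
    rw [Measure.bind_apply hA K.aemeasurable,
      integral_toReal (K.measurable_coe hA).aemeasurable (ae_of_all _ fun _ => measure_lt_top _ _)]
  rw [hbind P, hbind Q]
  exact integral_sub_mul_integral_le_Egamma hγ P Q (K.measurable_coe hA).ennreal_toReal
    (fun _ => ENNReal.toReal_nonneg) (fun _ => measureReal_le_one)

end Egamma

section etaGamma

variable {Y : Type*} [MeasurableSpace Y] {γ : ℝ} (K : Kernel Y Y) [IsMarkovKernel K]

lemma Egamma_bind_div_le_one (hγ : 0 ≤ γ) (P Q : Measure Y) [IsFiniteMeasure P]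
    [IsFiniteMeasure Q] : Egamma γ (P.bind K) (Q.bind K) / Egamma γ P Q ≤ 1 :=
  div_le_one_of_le₀ (Egamma_bind_le hγ P Q K) (Egamma_nonneg hγ P Q)

lemma etaGamma_le_one (hγ : 0 ≤ γ) : etaGamma γ K ≤ 1 :=
  Real.iSup_le (fun ⟨⟨P, Q⟩, _, _, _⟩ => Egamma_bind_div_le_one K hγ P Q) zero_le_one

lemma Egamma_le_etaGamma [MeasurableSingletonClass Y] (hγ : 0 ≤ γ) {a b : Y} (hab : a ≠ b) :
    Egamma γ (K a) (K b) ≤ etaGamma γ K := by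
  have hbdd : BddAbove (range fun p : {p : Measure Y × Measure Y //
      IsProbabilityMeasure p.1 ∧ IsProbabilityMeasure p.2 ∧ Egamma γ p.1 p.2 ≠ 0} =>
      Egamma γ (p.1.1.bind K) (p.1.2.bind K) / Egamma γ p.1.1 p.1.2) := by
    refine ⟨1, ?_⟩
    rintro _ ⟨⟨⟨P, Q⟩, _, _, _⟩, rfl⟩
    exact Egamma_bind_div_le_one K hγ P Q
  have hdirac := Egamma_dirac_dirac hγ hab
  have := le_ciSup hbdd ⟨(Measure.dirac a, Measure.dirac b), inferInstance, inferInstance,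
    hdirac ▸ one_ne_zero⟩
  rwa [Measure.dirac_bind K.measurable, Measure.dirac_bind K.measurable, hdirac, div_one] at this

end etaGamma

section laplaceMeasure

variable {m v : ℝ}

lemma laplaceMeasure_apply_of_eqOn (hv : 0 < v) {s : Set ℝ} (hs : MeasurableSet s)
    {g : ℝ → ℝ} (hg : IntegrableOn g s)
    (hgs : EqOn (fun t => (1 / (2 * v)) * Real.exp (-|t - m| / v)) g s) :
    laplaceMeasure m v s = ENNReal.ofReal (∫ t in s, g t) := by
  rw [laplaceMeasure, withDensity_apply _ hs, setIntegral_congr_fun hs hgs.symm,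
    ofReal_integral_eq_lintegral_ofReal (hg.congr_fun hgs.symm hs)
      (ae_of_all _ fun t => by positivity)]

lemma laplaceMeasure_Ioi (hv : 0 < v) {c : ℝ} (hc : m ≤ c) :
    laplaceMeasure m v (Ioi c) = ENNReal.ofReal (Real.exp (-((c - m) / v)) / 2) := by
  have ha : -v⁻¹ < 0 := neg_neg_of_pos (inv_pos.mpr hv)
  rw [laplaceMeasure_apply_of_eqOn hv measurableSet_Ioi
    ((integrableOn_exp_mul_Ioi ha c).const_mul (Real.exp (m / v) / (2 * v))), integral_const_mul,
    integral_exp_mul_Ioi ha]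
  · congr 1
    rw [show -((c - m) / v) = m / v + -v⁻¹ * c by ring, Real.exp_add]
    field_simp
  · intro t (ht : c < t)
    dsimp only
    rw [abs_of_nonneg (by linarith),
      show -(t - m) / v = m / v + -v⁻¹ * t by ring, Real.exp_add]
    ring

lemma laplaceMeasure_Iic (hv : 0 < v) {c : ℝ} (hc : c ≤ m) :
    laplaceMeasure m v (Iic c) = ENNReal.ofReal (Real.exp (-((m - c) / v)) / 2) := by
  have ha : 0 < v⁻¹ := inv_pos.mpr hv
  rw [laplaceMeasure_apply_of_eqOn hv measurableSet_Iic
    ((integrableOn_exp_mul_Iic ha c).const_mul (Real.exp (-(m / v)) / (2 * v))),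
    integral_const_mul, integral_exp_mul_Iic ha]
  · congr 1
    rw [show -((m - c) / v) = -(m / v) + v⁻¹ * c by ring, Real.exp_add]
    field_simp
  · intro t (ht : t ≤ c)
    dsimp only
    rw [abs_of_nonpos (by linarith),
      show -(-(t - m)) / v = -(m / v) + v⁻¹ * t by ring, Real.exp_add]
    ring

lemma isProbabilityMeasure_laplaceMeasure (hv : 0 < v) :
    IsProbabilityMeasure (laplaceMeasure m v) := by
  constructor
  rw [← Iic_union_Ioi (a := m), measure_union (Iic_disjoint_Ioi le_rfl) measurableSet_Ioi,
    laplaceMeasure_Iic hv le_rfl, laplaceMeasure_Ioi hv le_rfl,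
    ← ENNReal.ofReal_add (by positivity) (by positivity)]
  norm_num

lemma one_sub_le_Egamma_laplaceMeasure (hv : 0 < v) {γ : ℝ} (hγ : 0 ≤ γ) {m' c : ℝ}
    (hmc : m ≤ c) (hcm' : c ≤ m') :
    1 - Real.exp (-((c - m) / v)) / 2 - γ * (Real.exp (-((m' - c) / v)) / 2)
      ≤ Egamma γ (laplaceMeasure m v) (laplaceMeasure m' v) := by
  have := isProbabilityMeasure_laplaceMeasure (m := m) hv
  have hP : (laplaceMeasure m v (Iic c)).toReal = 1 - Real.exp (-((c - m) / v)) / 2 := by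
    rw [← compl_Ioi, prob_compl_eq_one_sub measurableSet_Ioi, laplaceMeasure_Ioi hv hmc,
      ENNReal.toReal_sub_of_le (by rw [← laplaceMeasure_Ioi hv hmc]; exact prob_le_one)
        ENNReal.one_ne_top, ENNReal.toReal_one, ENNReal.toReal_ofReal (by positivity)]
  have hQ := laplaceMeasure_Iic (m := m') hv hcm'
  have hIic := sub_le_Egamma hγ (laplaceMeasure m v) (laplaceMeasure m' v)
    (measurableSet_Iic (a := c))
  rwa [hP, hQ, ENNReal.toReal_ofReal (by positivity)] at hIic

end laplaceMeasure

/-- The contraction coefficient under `E_γ`-divergence of the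
(unconstrained) additive Laplace kernel `K(y) = L(y, v)` on `ℝ` is trivial:
`η_γ(K) = 1`. -/
theorem etaGamma_additive_laplace_eq_one (v : ℝ) (hv : 0 < v)
    (K : Kernel ℝ ℝ) [IsMarkovKernel K]
    (hK : ∀ y, K y = laplaceMeasure y v) (γ : ℝ) (hγ : 1 ≤ γ) :
    etaGamma γ K = 1 := by
  have hγ0 : 0 ≤ γ := zero_le_one.trans hγ
  have hbound : ∀ c > 0, 1 - (1 + γ) / 2 * Real.exp (-(c / v)) ≤ etaGamma γ K := fun c hc =>
    calc 1 - (1 + γ) / 2 * Real.exp (-(c / v))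
        = 1 - Real.exp (-((c - 0) / v)) / 2 - γ * (Real.exp (-((2 * c - c) / v)) / 2) := by
          ring_nf
      _ ≤ Egamma γ (K 0) (K (2 * c)) := by
          simpa only [hK] using one_sub_le_Egamma_laplaceMeasure hv hγ0 hc.le (by linarith)
      _ ≤ etaGamma γ K := Egamma_le_etaGamma K hγ0 (by linarith)
  have hlim : Tendsto (fun c => 1 - (1 + γ) / 2 * Real.exp (-(c / v))) atTop (𝓝 1) := by
    simpa using tendsto_const_nhds.sub ((Real.tendsto_exp_neg_atTop_nhds_zero.comp
      (tendsto_id.atTop_div_const hv)).const_mul ((1 + γ) / 2))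
  exact le_antisymm (etaGamma_le_one K hγ0)
    (le_of_tendsto hlim ((eventually_gt_atTop 0).mono hbound))
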